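/- Let d, n be positive integers, let M be a real d×n matrix, let Q ⊆ ℝ be an arbitrary set, and let S ⊆ ℝ be a finite set. Suppose x ∈ ℝ^d and δ ∈ ℝ^n are such that for every coordinate i with x_i ∉ Q one has (Mδ)_i ∈ S. Assume the following general-position condition: for every index set I ⊆ {1,…,d} with |I| = n+1 and every vector v ∈ ℝ^d whose entries v_i lie in S for all i ∈ I, there is no c ∈ ℝ^n with (Mc)_i = v_i for all i ∈ I. Then the number of coordinates i with x_i ∉ Q is at most n; equivalently, at least d − n coordinates of x lie in Q. -/

import Mathlib

theorem Set.ncard_le_of_forall_finset_subset_card_ne {α : Type*} {s : Set α} {n : ℕ}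
    (h : ∀ I : Finset α, ↑I ⊆ s → I.card ≠ n + 1) : s.ncard ≤ n := by
  by_contra! hs
  obtain ⟨t, hts, htcard⟩ := Set.exists_subset_card_eq (Nat.succ_le_of_lt hs)
  have ht : t.Finite := Set.finite_of_ncard_ne_zero (by omega)
  exact h ht.toFinset (by simpa using hts) (by rwa [← Set.ncard_eq_toFinset_card t ht])

theorem par_quantization_deterministic
    (d n : ℕ)
    (M : Matrix (Fin d) (Fin n) ℝ) (Q : Set ℝ) (S : Finset ℝ)
    (x : Fin d → ℝ) (δ : Fin n → ℝ)
    (hx : ∀ i : Fin d, x i ∉ Q → M.mulVec δ i ∈ S)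
    (hgen : ∀ I : Finset (Fin d), I.card = n + 1 →
      ∀ v : Fin d → ℝ, (∀ i ∈ I, v i ∈ S) →
        ¬ ∃ c : Fin n → ℝ, ∀ i ∈ I, M.mulVec c i = v i) :
    {i : Fin d | x i ∉ Q}.ncard ≤ n := by
  refine Set.ncard_le_of_forall_finset_subset_card_ne fun I hI hcard => ?_
  exact hgen I hcard (M.mulVec δ) (fun i hi => hx i (hI hi)) ⟨δ, fun _ _ => rfl⟩
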